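/- In the braid group B_5, the word σ1 σ2⁻¹ σ1 σ2 σ3 σ4⁻¹ σ3 σ4⁻¹ σ3 σ4 σ2 σ4 σ2 σ3⁻¹ (a braid representative of the knot 12n79) equals the product of the positive bands of its band decomposition with band centers {1, 3, 7, 9, 11, 13}; in particular, this braid is quasipositive. -/

import Mathlib

/-- The Artin relations for the braid group with `m` generators
`σ_1, …, σ_m` (indexed by `Fin m`), i.e. the braid group `B_{m+1}`:
`σ_i σ_j = σ_j σ_i` for `|i - j| ≥ 2`, and
`σ_i σ_{i+1} σ_i = σ_{i+1} σ_i σ_{i+1}`. -/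
def braidRels (m : ℕ) : Set (FreeGroup (Fin m)) :=
  { r | (∃ i j : Fin m, (i : ℕ) + 2 ≤ (j : ℕ) ∧
          r = FreeGroup.of i * FreeGroup.of j * (FreeGroup.of i)⁻¹ * (FreeGroup.of j)⁻¹) ∨
        (∃ i j : Fin m, (i : ℕ) + 1 = (j : ℕ) ∧
          r = FreeGroup.of i * FreeGroup.of j * FreeGroup.of i *
              (FreeGroup.of j)⁻¹ * (FreeGroup.of i)⁻¹ * (FreeGroup.of j)⁻¹) }

/-- The braid group `B_{m+1}`, presented with `m` Artin generators.
Here index `i : Fin m` corresponds to the Artin generator `σ_{i+1}`. -/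
abbrev BraidGrp (m : ℕ) := PresentedGroup (braidRels m)

/-- The Artin generator `σ_{i+1}` of the braid group `B_{m+1}`. -/
def σ {m : ℕ} (i : Fin m) : BraidGrp m := PresentedGroup.of i

/-- A letter of a braid word: a generator index together with a sign
(`true` = the positive generator, `false` = its inverse). -/
abbrev Letter (m : ℕ) := Fin m × Bool

/-- The group element represented by a letter. -/
def letterEl {m : ℕ} (x : Letter m) : BraidGrp m :=
  if x.2 then σ x.1 else (σ x.1)⁻¹

/-- The group element represented by a braid word. -/
def wordProd {m : ℕ} (w : List (Letter m)) : BraidGrp m :=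
  (w.map letterEl).prod

/-- The band of the band decomposition of the word `w` with band centers `S`
(1-based positions) at center `p`: namely `α_p * x_p * α_p⁻¹`, where `x_p` is
the letter of `w` at position `p` and `α_p` is the product, in increasing
order of position, of the letters of `w` at positions `q < p` with `q ∉ S`. -/
def band {m : ℕ} (w : List (Letter m)) (S : List ℕ) (p : ℕ) : BraidGrp m :=
  let α : BraidGrp m :=
    wordProd (((w.zipIdx.map Prod.swap).filter fun qx => decide (qx.1 + 1 < p ∧ qx.1 + 1 ∉ S)).map Prod.snd)
  match w[p - 1]? with
  | some x => α * letterEl x * α⁻¹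
  | none => 1

/-- The product, in increasing order of band center, of the bands of the
band decomposition of the word `w` with band centers `S`. -/
def bandProd {m : ℕ} (w : List (Letter m)) (S : List ℕ) : BraidGrp m :=
  (S.map (band w S)).prod

/-- A positive band in the braid group: a conjugate `α σ_j α⁻¹` of a generator. -/
def IsPositiveBand {m : ℕ} (x : BraidGrp m) : Prop :=
  ∃ (α : BraidGrp m) (j : Fin m), x = α * σ j * α⁻¹

/-- A braid is quasipositive if it is a product of positive bands. -/
def IsQuasipositive {m : ℕ} (x : BraidGrp m) : Prop :=
  ∃ l : List (BraidGrp m), (∀ b ∈ l, IsPositiveBand b) ∧ x = l.prod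

/-- A negative band in the braid group: a conjugate `α σ_j⁻¹ α⁻¹` of the
inverse of a generator. -/
def IsNegativeBand {m : ℕ} (x : BraidGrp m) : Prop :=
  ∃ (α : BraidGrp m) (j : Fin m), x = α * (σ j)⁻¹ * α⁻¹

/-- A braid is quasinegative if it is a product of negative bands. -/
def IsQuasinegative {m : ℕ} (x : BraidGrp m) : Prop :=
  ∃ l : List (BraidGrp m), (∀ b ∈ l, IsNegativeBand b) ∧ x = l.prod

/-- The braid word for the knot `12n79` (letter `(i, true)` is `σ_(i+1)`,
`(i, false)` is `σ_(i+1)⁻¹`). -/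
def theWord : List (Letter 4) :=
  [(0, true), (1, false), (0, true), (1, true), (2, true), (3, false), (2, true), (3, false), (2, true), (3, true), (1, true), (3, true), (1, true), (2, false)]

/-- The band centers. -/
def theCenters : List ℕ := [1, 3, 7, 9, 11, 13]

/-!
Let `c` be the subword of `w` formed by the letters that are not band centers. For consecutive
centers `p < p'`, `α_{p'}` is `α_p` followed by the letters of `c` strictly between `p` and `p'`,
so the product of the bands telescopes: `b_{p₁} ⋯ b_{p_k} · c = w`. Hence the band decomposition
represents `w` exactly when `c` is trivial; for the word of `12n79` with centers
`{1, 3, 7, 9, 11, 13}`, `c = σ₂⁻¹ σ₂ σ₃ σ₄⁻¹ σ₄⁻¹ σ₄ σ₄ σ₃⁻¹`, which is trivial already in the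
free group.
-/

theorem List.prod_map_conj {G ι : Type*} [Group G] (a : G) (f : ι → G) (l : List ι) :
    (l.map fun i => a * f i * a⁻¹).prod = a * (l.map f).prod * a⁻¹ := by
  induction l with
  | nil => simp
  | cons i l ih =>
    simp only [List.map_cons, List.prod_cons, ih]
    group

theorem List.add_two_mem_iff_add_one_mem_map_pred (U : List ℕ) (q : ℕ) :
    q + 2 ∈ U ↔ q + 1 ∈ U.map (· - 1) := by
  simp only [List.mem_map]
  constructor
  · exact fun h => ⟨q + 2, h, rfl⟩
  · rintro ⟨u, hu, hq⟩
    rwa [show q + 2 = u by omega]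

theorem List.add_two_mem_one_cons_iff (U : List ℕ) (q : ℕ) :
    q + 2 ∈ 1 :: U ↔ q + 1 ∈ U.map (· - 1) := by
  rw [List.mem_cons, ← List.add_two_mem_iff_add_one_mem_map_pred, or_iff_right (by omega)]

theorem List.pairwise_zero_cons_map_pred {U : List ℕ} (hU : (1 :: U).Pairwise (· < ·)) :
    (0 :: U.map (· - 1)).Pairwise (· < ·) := by
  simp only [List.pairwise_cons, List.mem_map, List.pairwise_map] at hU ⊢
  refine ⟨?_, hU.2.imp_of_mem fun {u v} hu _ huv => ?_⟩
  · rintro _ ⟨u, hu, rfl⟩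
    have := hU.1 u hu
    omega
  · have := hU.1 u hu
    omega

theorem List.exists_eq_one_cons_of_one_mem {S : List ℕ} (hS : (0 :: S).Pairwise (· < ·))
    (h1 : 1 ∈ S) : ∃ U, S = 1 :: U ∧ (1 :: U).Pairwise (· < ·) := by
  obtain ⟨s, U, rfl⟩ := List.exists_cons_of_ne_nil (List.ne_nil_of_mem h1)
  obtain rfl : s = 1 := by
    have := List.rel_of_pairwise_cons hS List.mem_cons_self
    rcases List.mem_cons.1 h1 with h | h
    · exact h.symm
    · have := List.rel_of_pairwise_cons hS.of_cons h
      omega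
  exact ⟨U, rfl, hS.of_cons⟩

theorem List.pairwise_one_cons_of_one_notMem {S : List ℕ} (hS : (0 :: S).Pairwise (· < ·))
    (h1 : 1 ∉ S) : (1 :: S).Pairwise (· < ·) := by
  refine List.pairwise_cons.2 ⟨fun s hs => ?_, hS.of_cons⟩
  have := List.rel_of_pairwise_cons hS hs
  have : s ≠ 1 := fun h => h1 (h ▸ hs)
  omega

section BandDecomposition

variable {m : ℕ}

/-- The word spelling `α_p` in `band w S p`; for `p = w.length + 1`, the subword of `w` formed
by the letters that are not band centers. -/
def offCenterLetters (w : List (Letter m)) (S : List ℕ) (p : ℕ) : List (Letter m) :=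
  ((w.zipIdx.map Prod.swap).filter fun qx => decide (qx.1 + 1 < p ∧ qx.1 + 1 ∉ S)).map Prod.snd

theorem wordProd_cons (x : Letter m) (w : List (Letter m)) :
    wordProd (x :: w) = letterEl x * wordProd w := List.prod_cons

theorem band_def (w : List (Letter m)) (S : List ℕ) (p : ℕ) :
    band w S p = match w[p - 1]? with
      | some x =>
        wordProd (offCenterLetters w S p) * letterEl x * (wordProd (offCenterLetters w S p))⁻¹
      | none => 1 := rfl

theorem band_nil (S : List ℕ) : band ([] : List (Letter m)) S = fun _ => 1 := rfl

theorem offCenterLetters_one (w : List (Letter m)) (S : List ℕ) :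
    offCenterLetters w S 1 = [] := by
  simp [offCenterLetters]

theorem offCenterLetters_cons {x : Letter m} {w : List (Letter m)} {S T : List ℕ}
    (hST : ∀ q, q + 2 ∈ S ↔ q + 1 ∈ T) (p : ℕ) :
    offCenterLetters (x :: w) S (p + 1) =
      (if 0 < p ∧ 1 ∉ S then [x] else []) ++ offCenterLetters w T p := by
  have hshift : ∀ i : ℕ, (i + 1 + 1 < p + 1 ∧ i + 1 + 1 ∉ S) ↔ (i + 1 < p ∧ i + 1 ∉ T) := by
    intro i
    rw [show i + 1 + 1 = i + 2 from rfl, hST, Nat.add_lt_add_iff_right (k := 1)]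
  simp only [offCenterLetters, List.zipIdx_cons, List.zipIdx_succ, List.map_cons, List.map_map,
    List.filter_cons, List.filter_map, Function.comp_def, Prod.swap, hshift]
  split_ifs <;> simp_all

theorem band_cons_one (x : Letter m) (w : List (Letter m)) (S : List ℕ) :
    band (x :: w) S 1 = letterEl x := by
  simp [band_def, offCenterLetters_one, wordProd]

theorem band_cons_add_two {x : Letter m} {w : List (Letter m)} {S T : List ℕ}
    (hST : ∀ q, q + 2 ∈ S ↔ q + 1 ∈ T) (p : ℕ) :
    band (x :: w) S (p + 2) =
      if 1 ∈ S then band w T (p + 1) else letterEl x * band w T (p + 1) * (letterEl x)⁻¹ := by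
  rw [band_def, band_def, offCenterLetters_cons hST, show p + 2 - 1 = p + 1 from rfl,
    List.getElem?_cons_succ, Nat.add_sub_cancel]
  by_cases h1 : 1 ∈ S <;> cases w[p]? <;> simp [h1, wordProd_cons, mul_assoc]

theorem map_band_cons {x : Letter m} {w : List (Letter m)} {S U : List ℕ}
    (hST : ∀ q, q + 2 ∈ S ↔ q + 1 ∈ U.map (· - 1)) (hU : ∀ u ∈ U, 2 ≤ u) :
    U.map (band (x :: w) S) = (U.map (· - 1)).map fun q =>
      if 1 ∈ S then band w (U.map (· - 1)) q
      else letterEl x * band w (U.map (· - 1)) q * (letterEl x)⁻¹ := by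
  rw [List.map_map]
  refine List.map_congr_left fun u hu => ?_
  obtain ⟨p, rfl⟩ := Nat.exists_eq_add_of_le' (hU u hu)
  exact band_cons_add_two hST p

theorem bandProd_cons_one_cons {x : Letter m} {w : List (Letter m)} {U : List ℕ}
    (hU : ∀ u ∈ U, 2 ≤ u) :
    bandProd (x :: w) (1 :: U) = letterEl x * bandProd w (U.map (· - 1)) := by
  simp only [bandProd, List.map_cons, List.prod_cons, band_cons_one,
    map_band_cons (List.add_two_mem_one_cons_iff U) hU, List.mem_cons_self, if_true]

theorem bandProd_cons_of_one_notMem {x : Letter m} {w : List (Letter m)} {S : List ℕ}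
    (h1 : 1 ∉ S) (hS : ∀ s ∈ S, 2 ≤ s) :
    bandProd (x :: w) S = letterEl x * bandProd w (S.map (· - 1)) * (letterEl x)⁻¹ := by
  simp only [bandProd, map_band_cons (List.add_two_mem_iff_add_one_mem_map_pred S) hS, h1,
    if_false, List.prod_map_conj]

-- Induction on the first letter `x` of the word: removing it shifts every center down by one, and
-- `x` is either the first band (if `1 ∈ S`) or conjugates all the bands (if `1 ∉ S`).
theorem bandProd_mul_wordProd_offCenterLetters :
    ∀ (w : List (Letter m)) (S : List ℕ), (0 :: S).Pairwise (· < ·) →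
      bandProd w S * wordProd (offCenterLetters w S (w.length + 1)) = wordProd w
  | [], S, _ => by simp [bandProd, band_nil, offCenterLetters, wordProd]
  | x :: w, S, hS => by
    by_cases h1 : 1 ∈ S
    · obtain ⟨U, rfl, hU⟩ := List.exists_eq_one_cons_of_one_mem hS h1
      have ih := bandProd_mul_wordProd_offCenterLetters w _ (List.pairwise_zero_cons_map_pred hU)
      rw [bandProd_cons_one_cons fun u hu => List.rel_of_pairwise_cons hU hu, List.length_cons,
        offCenterLetters_cons (List.add_two_mem_one_cons_iff U), if_neg (by simp), List.nil_append,
        wordProd_cons, ← ih, mul_assoc]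
    · have hU := List.pairwise_one_cons_of_one_notMem hS h1
      have ih := bandProd_mul_wordProd_offCenterLetters w _ (List.pairwise_zero_cons_map_pred hU)
      rw [bandProd_cons_of_one_notMem h1 fun s hs => List.rel_of_pairwise_cons hU hs,
        List.length_cons, offCenterLetters_cons (List.add_two_mem_iff_add_one_mem_map_pred S),
        if_pos ⟨Nat.succ_pos _, h1⟩, List.singleton_append, wordProd_cons, wordProd_cons, ← ih]
      group

theorem bandProd_eq_wordProd {w : List (Letter m)} {S : List ℕ} (hS : (0 :: S).Pairwise (· < ·))
    (hoff : wordProd (offCenterLetters w S (w.length + 1)) = 1) :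
    bandProd w S = wordProd w := by
  simpa [hoff] using bandProd_mul_wordProd_offCenterLetters w S hS

theorem isPositiveBand_band {w : List (Letter m)} {S : List ℕ} {p : ℕ} {j : Fin m}
    (h : w[p - 1]? = some (j, true)) : IsPositiveBand (band w S p) :=
  ⟨_, j, by rw [band_def, h]; rfl⟩

theorem isQuasipositive_bandProd {w : List (Letter m)} {S : List ℕ}
    (hS : ∀ p ∈ S, ∃ j, w[p - 1]? = some (j, true)) : IsQuasipositive (bandProd w S) := by
  refine ⟨S.map (band w S), ?_, rfl⟩
  simp only [List.mem_map, forall_exists_index, and_imp, forall_apply_eq_imp_iff₂]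
  intro p hp
  obtain ⟨j, hj⟩ := hS p hp
  exact isPositiveBand_band hj

end BandDecomposition

/-- The braid representative of `12n79` equals the product of the bands of its
band decomposition with the given band centers; in particular it is quasipositive. -/
theorem knot_12n79_quasipositive :
    wordProd theWord = bandProd theWord theCenters ∧
      IsQuasipositive (wordProd theWord) := by
  have hoff : offCenterLetters theWord theCenters (theWord.length + 1) =
      [(1, false), (1, true), (2, true), (3, false),
        (3, false), (3, true), (3, true), (2, false)] := rfl
  have htrivial : wordProd (offCenterLetters theWord theCenters (theWord.length + 1)) = 1 := by
    simp only [hoff, wordProd, letterEl, List.map_cons, List.map_nil, List.prod_cons,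
      List.prod_nil, if_true, Bool.false_eq_true, if_false]
    group
  have h := bandProd_eq_wordProd (by decide) htrivial
  exact ⟨h.symm, h ▸ isQuasipositive_bandProd (by decide)⟩
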